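/- arXiv:2310.08709 — 2 statements merged into one kernel-verified Lean document; each statement's English description precedes it below -/
import Mathlib

section
/- Let n ≥ 3 be an odd integer and let x_j = (cos(2πj/n)/(2cos(π/(2n))), sin(2πj/n)/(2cos(π/(2n))), 0) for j = 1,…,n. Then |x_i − x_j| ≤ 1 for all i, j ∈ {1,…,n}, and the number of unordered pairs {i,j} with 1 ≤ i < j ≤ n and |x_i − x_j| = 1 is exactly n. -/
open Real MeasureTheory Metric

noncomputable def pt (a b c : ℝ) : EuclideanSpace ℝ (Fin 3) :=
  (EuclideanSpace.equiv (Fin 3) ℝ).symm ![a, b, c]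

lemma dist_pt (a b a' b' : ℝ) : dist (pt a b 0) (pt a' b' 0) = Real.sqrt ((a-a')^2 + (b-b')^2) := by
  rw [EuclideanSpace.dist_eq]
  simp [pt, Fin.sum_univ_three, Real.dist_eq, sq_abs]

lemma half_sq (A B : ℝ) : (sin ((A-B)/2))^2 = (1 - cos (A-B))/2 := by
  have h := Real.cos_sq ((A-B)/2)
  have h2 : 2*((A-B)/2) = A-B := by ring
  rw [h2] at h
  nlinarith [Real.sin_sq_add_cos_sq ((A-B)/2)]

lemma trig (A B c : ℝ) (hc : c ≠ 0) :
    (cos A/(2*c) - cos B/(2*c))^2 + (sin A/(2*c) - sin B/(2*c))^2 = (sin ((A-B)/2))^2/c^2 := by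
  rw [half_sq, Real.cos_sub]
  field_simp
  nlinarith [Real.sin_sq_add_cos_sq A, Real.sin_sq_add_cos_sq B]

lemma key (n m k : ℕ) (hn : n = 2*m+1) (hm : 1 ≤ m) (hk1 : 1 ≤ k) (hk2 : k ≤ n - 1) :
    sin (π*k/n) ≤ cos (π/(2*n)) ∧ (sin (π*k/n) = cos (π/(2*n)) ↔ k = m ∨ k = m+1) := by
  have hn3 : 3 ≤ n := by omega
  have hnpos : (0:ℝ) < n := by positivity
  set t : ℤ := (n : ℤ) - 2*k with ht
  have htne : t ≠ 0 := by omega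
  have h1 : (1:ℤ) ≤ |t| := Int.one_le_abs htne
  have htle : |t| ≤ (n:ℤ) - 2 := by rw [abs_le]; omega
  have hsin : sin (π*k/n) = cos (π*|(t:ℝ)|/(2*n)) := by
    rw [← Real.cos_pi_div_two_sub]
    rw [show π*|(t:ℝ)| / (2*n) = |π*(t:ℝ)/(2*n)| by
      rw [abs_div, abs_mul, abs_of_nonneg Real.pi_pos.le, abs_of_nonneg (by positivity : (0:ℝ) ≤ 2*(n:ℝ))]]
    rw [Real.cos_abs]
    congr 1
    have h : ((t:ℝ)) = (n:ℝ) - 2*k := by rw [ht]; push_cast; ring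
    rw [h]; field_simp
  have h1' : (1:ℝ) ≤ |(t:ℝ)| := by rw [← Int.cast_abs]; exact_mod_cast h1
  have htle' : |(t:ℝ)| ≤ (n:ℝ) - 2 := by rw [← Int.cast_abs]; exact_mod_cast htle
  have hmem1 : π/(2*n) ∈ Set.Icc 0 π := by
    constructor
    · positivity
    · rw [div_le_iff₀ (by positivity)]
      nlinarith [Real.pi_pos]
  have hmem2 : π*|(t:ℝ)|/(2*n) ∈ Set.Icc 0 π := by
    constructor
    · positivity
    · rw [div_le_iff₀ (by positivity)]
      nlinarith [Real.pi_pos]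
  have harg : π/(2*n) ≤ π*|(t:ℝ)|/(2*n) := by
    gcongr
    nlinarith [Real.pi_pos]
  constructor
  · rw [hsin]
    exact Real.cos_le_cos_of_nonneg_of_le_pi hmem1.1 hmem2.2 harg
  · rw [hsin]
    constructor
    · intro h
      have := Real.strictAntiOn_cos.injOn hmem2 hmem1 h
      have habs : |(t:ℝ)| = 1 := by
        field_simp at this
        nlinarith [Real.pi_pos]
      have h2 : |t| = 1 := by rw [← Int.cast_abs] at habs; exact_mod_cast habs
      rcases (abs_eq (by norm_num : (0:ℤ) ≤ 1)).mp h2 with h3|h3 <;> omega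
    · intro h
      have : |t| = 1 := by rw [abs_eq (by norm_num : (0:ℤ) ≤ 1)]; omega
      have habs : |(t:ℝ)| = 1 := by rw [← Int.cast_abs, this]; norm_num
      rw [habs, mul_one]

lemma sin_pos_aux (n k : ℕ) (hn : 3 ≤ n) (hk1 : 1 ≤ k) (hk2 : k ≤ n - 1) :
    0 < sin (π*k/n) := by
  have hnpos : (0:ℝ) < n := by positivity
  apply Real.sin_pos_of_pos_of_lt_pi
  · have : (0:ℝ) < k := by exact_mod_cast hk1
    positivity
  · rw [div_lt_iff₀ hnpos]
    have : (k:ℝ) < n := by exact_mod_cast (by omega : k < n)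
    nlinarith [Real.pi_pos]

/-- The vertices of a regular odd n-gon of diameter one have exactly n diametric pairs. -/
theorem stmt_16 (n : ℕ) (hn : 3 ≤ n) (hodd : Odd n)
    (x : ℕ → EuclideanSpace ℝ (Fin 3))
    (hbase : ∀ j, 1 ≤ j → j ≤ n →
      x j = pt (Real.cos (2 * π * j / n) / (2 * Real.cos (π / (2 * n))))
               (Real.sin (2 * π * j / n) / (2 * Real.cos (π / (2 * n)))) 0) :
    (∀ i j, 1 ≤ i → i ≤ n → 1 ≤ j → j ≤ n → dist (x i) (x j) ≤ 1) ∧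
    ((Finset.Icc 1 n ×ˢ Finset.Icc 1 n).filter
        (fun p => p.1 < p.2 ∧ dist (x p.1) (x p.2) = 1)).card = n := by
  obtain ⟨m, hm⟩ := hodd
  have hm1 : 1 ≤ m := by omega
  have hnpos : (0:ℝ) < n := by positivity
  have hcpos : 0 < Real.cos (π / (2 * n)) := by
    apply Real.cos_pos_of_mem_Ioo
    constructor
    · have : (0:ℝ) < π / (2*n) := by positivity
      linarith [Real.pi_pos]
    · rw [div_lt_div_iff₀ (by positivity) (by norm_num)]
      have h2 : (2:ℝ) ≤ n := by exact_mod_cast (by omega : 2 ≤ n)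
      nlinarith [Real.pi_pos]
  have hcne : Real.cos (π / (2 * n)) ≠ 0 := ne_of_gt hcpos
  -- distance formula
  have hdist : ∀ i j : ℕ, 1 ≤ i → i ≤ n → 1 ≤ j → j ≤ n →
      dist (x i) (x j) = |sin (π * ((i:ℝ) - j) / n)| / Real.cos (π / (2*n)) := by
    intro i j hi1 hi2 hj1 hj2
    rw [hbase i hi1 hi2, hbase j hj1 hj2, dist_pt,
      trig (2 * π * i / n) (2 * π * j / n) _ hcne]
    have harg : (2 * π * i / n - 2 * π * j / n) / 2 = π * ((i:ℝ) - j) / n := by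
      field_simp
    rw [harg]
    rw [show sin (π * ((i:ℝ) - j) / n) ^ 2 / Real.cos (π / (2*n)) ^ 2
        = (|sin (π * ((i:ℝ) - j) / n)| / Real.cos (π / (2*n)))^2 by
      rw [div_pow, sq_abs]]
    exact Real.sqrt_sq (by positivity)
  -- for i < j in range, dist = sin(π(j-i)/n)/c
  have hdist' : ∀ i j : ℕ, 1 ≤ i → j ≤ n → i < j →
      dist (x i) (x j) = sin (π * ((j - i : ℕ):ℝ) / n) / Real.cos (π / (2*n)) := by
    intro i j hi1 hj2 hij
    rw [hdist i j hi1 (by omega) (by omega) hj2]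
    congr 1
    have h1 : π * ((i:ℝ) - j) / n = -(π * ((j - i : ℕ):ℝ) / n) := by
      rw [Nat.cast_sub hij.le]; field_simp; ring
    rw [h1, Real.sin_neg, abs_neg, abs_of_pos]
    exact sin_pos_aux n (j-i) hn (by omega) (by omega)
  constructor
  · intro i j hi1 hi2 hj1 hj2
    rcases lt_trichotomy i j with h|h|h
    · rw [hdist' i j hi1 hj2 h, div_le_one hcpos]
      exact (key n m (j-i) hm hm1 (by omega) (by omega)).1
    · subst h; simp
    · rw [dist_comm, hdist' j i hj1 hi2 h, div_le_one hcpos]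
      exact (key n m (i-j) hm hm1 (by omega) (by omega)).1
  · -- counting
    have heq : ∀ i j : ℕ, 1 ≤ i → j ≤ n → i < j →
        (dist (x i) (x j) = 1 ↔ (j - i = m ∨ j - i = m + 1)) := by
      intro i j hi1 hj2 hij
      rw [hdist' i j hi1 hj2 hij, div_eq_one_iff_eq hcne]
      exact (key n m (j-i) hm hm1 (by omega) (by omega)).2
    have hset : (Finset.Icc 1 n ×ˢ Finset.Icc 1 n).filter
        (fun p => p.1 < p.2 ∧ dist (x p.1) (x p.2) = 1)
        = ((Finset.Icc 1 (m+1)).image fun i => (i, i+m))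
          ∪ ((Finset.Icc 1 m).image fun i => (i, i+m+1)) := by
      ext ⟨i, j⟩
      simp only [Finset.mem_filter, Finset.mem_product, Finset.mem_Icc, Finset.mem_union,
        Finset.mem_image, Prod.mk.injEq]
      constructor
      · rintro ⟨⟨⟨hi1, hi2⟩, hj1, hj2⟩, hij, hd⟩
        rcases (heq i j hi1 hj2 hij).mp hd with h|h
        · exact Or.inl ⟨i, ⟨hi1, by omega⟩, rfl, by omega⟩
        · exact Or.inr ⟨i, ⟨hi1, by omega⟩, rfl, by omega⟩
      · rintro (⟨a, ⟨ha1, ha2⟩, rfl, rfl⟩ | ⟨a, ⟨ha1, ha2⟩, rfl, rfl⟩)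
        · refine ⟨⟨⟨ha1, by omega⟩, by omega, by omega⟩, by omega, ?_⟩
          exact (heq a (a+m) ha1 (by omega) (by omega)).mpr (by omega)
        · refine ⟨⟨⟨ha1, by omega⟩, by omega, by omega⟩, by omega, ?_⟩
          exact (heq a (a+m+1) ha1 (by omega) (by omega)).mpr (by omega)
    rw [hset, Finset.card_union_of_disjoint, Finset.card_image_of_injective,
      Finset.card_image_of_injective, Nat.card_Icc, Nat.card_Icc]
    · omega
    · intro a b hab; simpa using hab
    · intro a b hab; simpa using hab
    · rw [Finset.disjoint_left]
      rintro ⟨i, j⟩ h1 h2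
      simp only [Finset.mem_image, Finset.mem_Icc, Prod.mk.injEq] at h1 h2
      obtain ⟨a, _, rfl, rfl⟩ := h1
      obtain ⟨b, _, hba, hm2⟩ := h2
      omega
end

section
/- Let n ≥ 3 be an odd integer and t ∈ (0,1). With the elongated pyramid points x_j = (cos(2πj/n)/(2cos(π/(2n))), sin(2πj/n)/(2cos(π/(2n))), 0) for j = 1,…,n, x_{n+j} = t·x_j − α·e₃ for j = 1,…,n where α = √(1 − (t² + 1 + 2t·cos(π/n))/(2cos(π/(2n)))²), and apex x_{2n+1} = β·e₃ where β = √(1 − t²/(2cos(π/(2n)))²) − α, one has |x_{2n+1} − x_{n+j}| = 1 for all j = 1,…,n, and |x_{2n+1} − x_j| ≤ 1 for all j = 1,…,n. -/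
open Real MeasureTheory Metric

/-!
With `c = 2 cos(π/(2n))` one has `c² = 2 + 2 cos(π/n)`, and the base and middle vertices lie on
horizontal circles of radii `1/c` and `t/c` about the vertical axis. The squared distance from the
apex to a middle vertex is `t²/c² + (α + β)²`, which is `1` because `α + β = √(1 - t²/c²)`. For a base
vertex it is `1/c² + β²`, and `√a - √b ≤ √(a - b)` gives `β² ≤ (1 + 2t cos(π/n))/c² ≤ 1 - 1/c²`.
-/

lemma Real.sqrt_sub_sqrt_le_sqrt_sub {a b : ℝ} (hb : 0 ≤ b) (hba : b ≤ a) :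
    √a - √b ≤ √(a - b) := by
  have hab : 0 ≤ a - b := sub_nonneg.2 hba
  rw [sub_le_iff_le_add, sqrt_le_left (by positivity)]
  nlinarith [sq_sqrt hb, sq_sqrt hab, sqrt_nonneg b, sqrt_nonneg (a - b)]

lemma Real.two_mul_cos_half_sq (x : ℝ) : (2 * cos (x / 2)) ^ 2 = 2 + 2 * cos x := by
  rw [mul_pow, cos_sq, mul_div_cancel₀ x two_ne_zero]
  ring

lemma Real.cos_pi_div_natCast_nonneg {n : ℕ} (hn : 2 ≤ n) : 0 ≤ cos (π / n) := by
  have hn' : (2 : ℝ) ≤ n := by exact_mod_cast hn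
  apply cos_nonneg_of_mem_Icc
  constructor
  · linarith [div_nonneg pi_pos.le (by positivity : (0:ℝ) ≤ n), pi_pos]
  · exact div_le_div_of_nonneg_left pi_pos.le two_pos hn'

lemma smul_pt (r a b c : ℝ) : r • pt a b c = pt (r * a) (r * b) (r * c) := by
  ext i; fin_cases i <;> simp [pt]

lemma pt_sub_pt (a b c a' b' c' : ℝ) : pt a b c - pt a' b' c' = pt (a - a') (b - b') (c - c') := by
  ext i; fin_cases i <;> simp [pt]

lemma dist_pt_pt (a b c a' b' c' : ℝ) :
    dist (pt a b c) (pt a' b' c') = √((a - a') ^ 2 + (b - b') ^ 2 + (c - c') ^ 2) := by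
  simp [EuclideanSpace.dist_eq, Fin.sum_univ_three, pt, Real.dist_eq, sq_abs, add_assoc]

theorem stmt_19_general (n : ℕ) (hn : 3 ≤ n) (t : ℝ) (ht : t ∈ Set.Ioo (0:ℝ) 1)
    (α β : ℝ)
    (hα : α = Real.sqrt (1 - (t ^ 2 + 1 + 2 * t * Real.cos (π / n)) / (2 * Real.cos (π / (2 * n))) ^ 2))
    (hβ : β = Real.sqrt (1 - t ^ 2 / (2 * Real.cos (π / (2 * n))) ^ 2) - α)
    (x : ℕ → EuclideanSpace ℝ (Fin 3))
    (hbase : ∀ j, 1 ≤ j → j ≤ n →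
      x j = pt (Real.cos (2 * π * j / n) / (2 * Real.cos (π / (2 * n))))
               (Real.sin (2 * π * j / n) / (2 * Real.cos (π / (2 * n)))) 0)
    (hmid : ∀ j, 1 ≤ j → j ≤ n → x (n + j) = t • x j - α • pt 0 0 1)
    (hapex : x (2 * n + 1) = β • pt 0 0 1) :
    (∀ j, 1 ≤ j → j ≤ n → dist (x (2 * n + 1)) (x (n + j)) = 1) ∧
    (∀ j, 1 ≤ j → j ≤ n → dist (x (2 * n + 1)) (x j) ≤ 1) := by
  obtain ⟨ht0, ht1⟩ := ht
  set c := 2 * cos (π / (2 * n))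
  set k := cos (π / n)
  have hc : c ^ 2 = 2 + 2 * k := by
    rw [← two_mul_cos_half_sq, div_div, mul_comm (n : ℝ)]
  have hk0 : 0 ≤ k := cos_pi_div_natCast_nonneg (by omega)
  have hk1 : k ≤ 1 := cos_le_one _
  have hc0 : 0 < c ^ 2 := by rw [hc]; positivity
  have hα_rad : 0 ≤ 1 - (t ^ 2 + 1 + 2 * t * k) / c ^ 2 := by
    rw [sub_nonneg, div_le_one hc0, hc]; nlinarith
  have hrad_le : 1 - (t ^ 2 + 1 + 2 * t * k) / c ^ 2 ≤ 1 - t ^ 2 / c ^ 2 := by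
    gcongr; nlinarith
  have hβα_sq : (β + α) ^ 2 = 1 - t ^ 2 / c ^ 2 := by
    rw [hβ, sub_add_cancel, sq_sqrt (hα_rad.trans hrad_le)]
  have hβ0 : 0 ≤ β := by rw [hβ, hα, sub_nonneg]; exact sqrt_le_sqrt hrad_le
  have hβsq : β ^ 2 ≤ 1 - 1 / c ^ 2 := calc
    β ^ 2 ≤ √(1 - t ^ 2 / c ^ 2 - (1 - (t ^ 2 + 1 + 2 * t * k) / c ^ 2)) ^ 2 := by
      gcongr; rw [hβ, hα]; exact sqrt_sub_sqrt_le_sqrt_sub hα_rad hrad_le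
    _ = (1 + 2 * t * k) / c ^ 2 := by rw [sq_sqrt (sub_nonneg.2 hrad_le)]; ring
    _ ≤ 1 - 1 / c ^ 2 := by
      rw [one_sub_div hc0.ne', hc]; gcongr; nlinarith
  have hcircle : ∀ θ : ℝ, (cos θ / c) ^ 2 + (sin θ / c) ^ 2 = 1 / c ^ 2 := fun θ => by
    rw [div_pow, div_pow, ← add_div, cos_sq_add_sin_sq]
  refine ⟨fun j hj1 hjn => ?_, fun j hj1 hjn => ?_⟩
  · rw [hapex, hmid j hj1 hjn, hbase j hj1 hjn, smul_pt, smul_pt, smul_pt, pt_sub_pt, dist_pt_pt,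
      sqrt_eq_one]
    linear_combination t ^ 2 * hcircle (2 * π * j / n) + hβα_sq
  · rw [hapex, hbase j hj1 hjn, smul_pt, dist_pt_pt, sqrt_le_one]
    linear_combination hcircle (2 * π * j / n) + hβsq

/-- Distances from the apex of the elongated pyramid to the other vertices. -/
theorem stmt_19 (n : ℕ) (hn : 3 ≤ n) (hodd : Odd n) (t : ℝ) (ht : t ∈ Set.Ioo (0:ℝ) 1)
    (α β : ℝ)
    (hα : α = Real.sqrt (1 - (t ^ 2 + 1 + 2 * t * Real.cos (π / n)) / (2 * Real.cos (π / (2 * n))) ^ 2))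
    (hβ : β = Real.sqrt (1 - t ^ 2 / (2 * Real.cos (π / (2 * n))) ^ 2) - α)
    (x : ℕ → EuclideanSpace ℝ (Fin 3))
    (hbase : ∀ j, 1 ≤ j → j ≤ n →
      x j = pt (Real.cos (2 * π * j / n) / (2 * Real.cos (π / (2 * n))))
               (Real.sin (2 * π * j / n) / (2 * Real.cos (π / (2 * n)))) 0)
    (hmid : ∀ j, 1 ≤ j → j ≤ n → x (n + j) = t • x j - α • pt 0 0 1)
    (hapex : x (2 * n + 1) = β • pt 0 0 1) :
    (∀ j, 1 ≤ j → j ≤ n → dist (x (2 * n + 1)) (x (n + j)) = 1) ∧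
    (∀ j, 1 ≤ j → j ≤ n → dist (x (2 * n + 1)) (x j) ≤ 1) :=
  stmt_19_general n hn t ht α β hα hβ x hbase hmid hapex
end
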